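/- Let n ≥ 2, 1 ≤ j ≤ n, and 1 ≤ r ≤ n−1, and let M̃ be the normalized adjacency matrix of the full-connection star-of-cliques graph. Define w ∈ ℝ^{1+n²} by w_{(j,k)} = 1/√(r(r+1)) for 1 ≤ k ≤ r, w_{(j,r+1)} = −r/√(r(r+1)), and all other coordinates 0. Then w is a unit vector and M̃ w = −(1/n) w. -/

import Mathlib

/-!
A vector supported on a single clique whose entries sum to zero is invisible to the centre and
to the other cliques, while on its own clique the block `(J - I) / n` acts on it as `-1/n`.
The vector `w` is of this kind: on its clique it is a row of the Helmert matrix, a unit vector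
orthogonal to the all-ones vector.
-/

/-- Normalized adjacency matrix of the full-connection star-of-cliques graph on the
`1 + n²` vertices `{center} ∪ {(j,k) : j,k ∈ Fin n}` (the center is `none`).  Its
entries are `n^{-3/2} = 1/(n√n)` between the center and any clique vertex, `1/n`
between distinct vertices of the same clique, and `0` otherwise. -/
noncomputable def starFullNormAdj (n : ℕ) :
    Matrix (Option (Fin n × Fin n)) (Option (Fin n × Fin n)) ℝ := fun i j =>
  match i, j with
  | none, none => 0
  | none, some _ => 1 / ((n : ℝ) * Real.sqrt (n : ℝ))
  | some _, none => 1 / ((n : ℝ) * Real.sqrt (n : ℝ))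
  | some (j₁, k₁), some (j₂, k₂) => if j₁ = j₂ ∧ k₁ ≠ k₂ then 1 / (n : ℝ) else 0

open Finset

theorem Fin.sum_ite_lt_ite_eq {M : Type*} [AddCommMonoid M] {n r : ℕ} (hr : r < n) (b c : M) :
    ∑ k : Fin n, (if (k : ℕ) < r then b else if (k : ℕ) = r then c else 0) = r • b + c := by
  obtain ⟨m, rfl⟩ : ∃ m, n = r + 1 + m := ⟨n - (r + 1), by omega⟩
  rw [Fin.sum_univ_eq_sum_range (fun i => if i < r then b else if i = r then c else 0),
    sum_range_add, sum_range_succ]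
  have head : ∑ i ∈ range r, (if i < r then b else if i = r then c else 0) = r • b := by
    rw [sum_congr rfl fun i hi => if_pos (mem_range.mp hi), Finset.sum_const, card_range]
  have tail : ∑ i ∈ range m, (if r + 1 + i < r then b else if r + 1 + i = r then c else 0)
      = 0 :=
    sum_eq_zero fun i _ => by rw [if_neg (by omega), if_neg (by omega)]
  simp [head, tail]

section Helmert

variable (n r : ℕ)

/-- The `r`-th row of the Helmert matrix of order `n`. -/
noncomputable def helmertVec : Fin n → ℝ := fun k =>
  if (k : ℕ) < r then 1 / Real.sqrt ((r : ℝ) * ((r : ℝ) + 1))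
  else if (k : ℕ) = r then -(r : ℝ) / Real.sqrt ((r : ℝ) * ((r : ℝ) + 1)) else 0

variable {n r}

theorem sum_helmertVec (hr : r < n) : ∑ k, helmertVec n r k = 0 := by
  unfold helmertVec
  rw [Fin.sum_ite_lt_ite_eq hr, nsmul_eq_mul]
  ring

theorem sum_helmertVec_sq (hr0 : 1 ≤ r) (hr : r < n) : ∑ k, helmertVec n r k ^ 2 = 1 := by
  have hpos : (0 : ℝ) < r * (r + 1) := by positivity
  set s := Real.sqrt ((r : ℝ) * (r + 1))
  have hs : s ^ 2 = r * (r + 1) := Real.sq_sqrt hpos.le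
  have hsq : ∀ k : Fin n, helmertVec n r k ^ 2 =
      if (k : ℕ) < r then 1 / s ^ 2 else if (k : ℕ) = r then r ^ 2 / s ^ 2 else 0 := by
    intro k
    unfold helmertVec
    split_ifs <;> ring
  rw [sum_congr rfl fun k _ => hsq k, Fin.sum_ite_lt_ite_eq hr, nsmul_eq_mul, hs]
  field_simp
  ring

end Helmert

section CliqueVec

variable {n : ℕ}

def cliqueVec (j : Fin n) (f : Fin n → ℝ) (v : Option (Fin n × Fin n)) : ℝ :=
  v.elim 0 fun p => if p.1 = j then f p.2 else 0

theorem sum_mul_cliqueVec (g : Option (Fin n × Fin n) → ℝ) (j : Fin n) (f : Fin n → ℝ) :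
    ∑ v, g v * cliqueVec j f v = ∑ k, g (some (j, k)) * f k := by
  simp [Fintype.sum_option, Fintype.sum_prod_type, cliqueVec, mul_ite]

theorem sum_cliqueVec_sq (j : Fin n) (f : Fin n → ℝ) :
    ∑ v, cliqueVec j f v ^ 2 = ∑ k, f k ^ 2 := by
  simp only [sq, sum_mul_cliqueVec]
  simp [cliqueVec]

theorem starFullNormAdj_mulVec_cliqueVec (j : Fin n) {f : Fin n → ℝ} (hf : ∑ k, f k = 0) :
    (starFullNormAdj n).mulVec (cliqueVec j f) = (-(1 / (n : ℝ))) • cliqueVec j f := by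
  ext (_ | ⟨j₁, k₁⟩) <;> simp only [Matrix.mulVec, dotProduct, sum_mul_cliqueVec, Pi.smul_apply]
  · simp [starFullNormAdj, ← mul_sum, hf, cliqueVec]
  · by_cases hj : j₁ = j
    · subst hj
      have off_diag : ∀ k, starFullNormAdj n (some (j₁, k₁)) (some (j₁, k)) * f k
          = 1 / n * f k - if k₁ = k then 1 / n * f k else 0 := by
        intro k
        by_cases hk : k₁ = k <;> simp [starFullNormAdj, hk]
      simp only [off_diag, sum_sub_distrib, ← mul_sum, hf, sum_ite_eq, mem_univ, if_true,
        cliqueVec, Option.elim_some, smul_eq_mul]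
      ring
    · simp [starFullNormAdj, cliqueVec, hj]

end CliqueVec

theorem starFull_clique_internal_eigenvector
    (n : ℕ) (j : Fin n) (r : ℕ) (hr1 : 1 ≤ r) (hr2 : r ≤ n - 1)
    (w : Option (Fin n × Fin n) → ℝ)
    (hw : ∀ v, w v = match v with
      | none => 0
      | some (j', k) =>
          if j' = j then
            (if k.val < r then 1 / Real.sqrt ((r : ℝ) * ((r : ℝ) + 1))
             else if k.val = r then -(r : ℝ) / Real.sqrt ((r : ℝ) * ((r : ℝ) + 1))
             else 0)
          else 0) :
    (∑ v, w v ^ 2 = 1) ∧ (starFullNormAdj n).mulVec w = (-(1 / (n : ℝ))) • w := by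
  have hrn : r < n := by omega
  obtain rfl : w = cliqueVec j (helmertVec n r) := funext fun v => by
    rw [hw]; rcases v with _ | ⟨_, _⟩ <;> rfl
  exact ⟨(sum_cliqueVec_sq j _).trans (sum_helmertVec_sq hr1 hrn),
    starFullNormAdj_mulVec_cliqueVec j (sum_helmertVec hrn)⟩
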